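/- In System F, if a term of the form (x u₁ … uₙ) with n ≥ 1 has type C in a context where x has type A₁,…,Aₘ → X with X a type variable and m ≥ n, then the type variable X occurs free in C. -/
import Mathlib


inductive Lam : Type
  | var : ℕ → Lam
  | app : Lam → Lam → Lam
  | lam : Lam → Lam
deriving DecidableEq

namespace Lam

/-- Lift (shift up by one) all de Bruijn indices ≥ d. -/
def lift (d : ℕ) : Lam → Lam
  | var n => if n < d then var n else var (n + 1)
  | app u v => app (lift d u) (lift d v)
  | lam u => lam (lift (d + 1) u)

/-- Capture-avoiding substitution of s for the de Bruijn index d. -/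
def subst (d : ℕ) (s : Lam) : Lam → Lam
  | var n => if n = d then s else if n < d then var n else var (n - 1)
  | app u v => app (subst d s u) (subst d s v)
  | lam u => lam (subst (d + 1) (lift 0 s) u)

/-- One-step β-reduction. -/
inductive Step : Lam → Lam → Prop
  | beta (u v : Lam) : Step (app (lam u) v) (subst 0 v u)
  | appL {u u' : Lam} (v : Lam) : Step u u' → Step (app u v) (app u' v)
  | appR (u : Lam) {v v' : Lam} : Step v v' → Step (app u v) (app u v')
  | lam {u u' : Lam} : Step u u' → Step (lam u) (lam u')

/-- β-equivalence: the reflexive-symmetric-transitive closure of β-reduction. -/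
inductive BetaEq : Lam → Lam → Prop
  | step {u v} : Step u v → BetaEq u v
  | refl (u) : BetaEq u u
  | symm {u v} : BetaEq u v → BetaEq v u
  | trans {u v w} : BetaEq u v → BetaEq v w → BetaEq u w

/-- One step of head reduction: contract the head redex. -/
inductive HeadStep : Lam → Lam → Prop
  | beta (u v : Lam) : HeadStep (app (lam u) v) (subst 0 v u)
  | appL {u u' : Lam} (v : Lam) : HeadStep u u' → (∀ w, u ≠ lam w) →
      HeadStep (app u v) (app u' v)
  | lam {u u' : Lam} : HeadStep u u' → HeadStep (lam u) (lam u')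

/-- `Heads u v`: u head-reduces to v in finitely many steps. -/
def Heads : Lam → Lam → Prop := Relation.ReflTransGen HeadStep

/-- A term is normal if it contains no β-redex. -/
def Normal (t : Lam) : Prop := ∀ u, ¬ Step t u

/-- All free de Bruijn indices of the term are < d. -/
def ClosedUnder : ℕ → Lam → Prop
  | d, var n => n < d
  | d, app u v => ClosedUnder d u ∧ ClosedUnder d v
  | d, lam u => ClosedUnder (d + 1) u

/-- A term is closed if it has no free variables. -/
def Closed (t : Lam) : Prop := ClosedUnder 0 t

/-- The de Bruijn index i occurs free in the term. -/
def FreeIn : ℕ → Lam → Prop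
  | i, var n => n = i
  | i, app u v => FreeIn i u ∨ FreeIn i v
  | i, lam u => FreeIn (i + 1) u

/-- n-fold application: (f^n x). -/
def iterApp : ℕ → Lam → Lam → Lam
  | 0, _, x => x
  | n + 1, f, x => app f (iterApp n f x)

/-- The n-th Church numeral λx.λf.(f^n x). -/
def church (n : ℕ) : Lam := lam (lam (iterApp n (var 0) (var 1)))

/-- T = λx.λy.x -/
def Ttm : Lam := lam (lam (var 1))

/-- F = λx.λy.y -/
def Ftm : Lam := lam (lam (var 0))

end Lam

/-- Types / formulas of System F, with de Bruijn type variables. -/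
inductive Ty : Type
  | var : ℕ → Ty
  | bot : Ty
  | arrow : Ty → Ty → Ty
  | all : Ty → Ty
deriving DecidableEq

namespace Ty

def lift (d : ℕ) : Ty → Ty
  | var n => if n < d then var n else var (n + 1)
  | bot => bot
  | arrow a b => arrow (lift d a) (lift d b)
  | all a => all (lift (d + 1) a)

/-- Capture-avoiding substitution of the type G for the type variable d: A[G/X]. -/
def subst (d : ℕ) (G : Ty) : Ty → Ty
  | var n => if n = d then G else if n < d then var n else var (n - 1)
  | bot => bot
  | arrow a b => arrow (subst d G a) (subst d G b)
  | all a => all (subst (d + 1) (lift 0 G) a)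

/-- The type variable i occurs free in the type. -/
def Free : ℕ → Ty → Prop
  | i, var n => n = i
  | _, bot => False
  | i, arrow a b => Free i a ∨ Free i b
  | i, all a => Free (i + 1) a

/-- ¬A := A → ⊥ -/
def neg (a : Ty) : Ty := arrow a bot

end Ty

/-- Curry-style System F typing: Γ ⊢_F t : A. -/
inductive Typing : List Ty → Lam → Ty → Prop
  | var {Γ : List Ty} {n : ℕ} {A : Ty} : Γ[n]? = some A → Typing Γ (Lam.var n) A
  | lam {Γ A B t} : Typing (A :: Γ) t B → Typing Γ (Lam.lam t) (Ty.arrow A B)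
  | app {Γ A B u v} : Typing Γ u (Ty.arrow A B) → Typing Γ v A →
      Typing Γ (Lam.app u v) B
  | allI {Γ A t} : Typing (Γ.map (Ty.lift 0)) t A → Typing Γ t (Ty.all A)
  | allE {Γ A t} (G : Ty) : Typing Γ t (Ty.all A) → Typing Γ t (Ty.subst 0 G A)

/-- Minimal second-order propositional logic (the logic of System F). -/
inductive Prov : List Ty → Ty → Prop
  | ax {Γ A} : A ∈ Γ → Prov Γ A
  | arrI {Γ A B} : Prov (A :: Γ) B → Prov Γ (Ty.arrow A B)
  | arrE {Γ A B} : Prov Γ (Ty.arrow A B) → Prov Γ A → Prov Γ B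
  | allI {Γ A} : Prov (Γ.map (Ty.lift 0)) A → Prov Γ (Ty.all A)
  | allE {Γ A} (G : Ty) : Prov Γ (Ty.all A) → Prov Γ (Ty.subst 0 G A)

/-- Classical second-order propositional logic F_C: F plus double-negation elimination. -/
inductive ProvC : List Ty → Ty → Prop
  | ax {Γ A} : A ∈ Γ → ProvC Γ A
  | arrI {Γ A B} : ProvC (A :: Γ) B → ProvC Γ (Ty.arrow A B)
  | arrE {Γ A B} : ProvC Γ (Ty.arrow A B) → ProvC Γ A → ProvC Γ B
  | allI {Γ A} : ProvC (Γ.map (Ty.lift 0)) A → ProvC Γ (Ty.all A)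
  | allE {Γ A} (G : Ty) : ProvC Γ (Ty.all A) → ProvC Γ (Ty.subst 0 G A)
  | dne {Γ A} : ProvC Γ (Ty.neg (Ty.neg A)) → ProvC Γ A

/-- The Gödel translation A ↦ A*. -/
def godel : Ty → Ty
  | Ty.var n => Ty.neg (Ty.var n)
  | Ty.bot => Ty.bot
  | Ty.arrow a b => Ty.arrow (godel a) (godel b)
  | Ty.all a => Ty.all (godel a)

/-- The type of booleans B = ∀X.(X → X → X). -/
def BoolTy : Ty := Ty.all (Ty.arrow (Ty.var 0) (Ty.arrow (Ty.var 0) (Ty.var 0)))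

/-- The type of Church integers N = ∀X.(X → ((X → X) → X)). -/
def NatTy : Ty :=
  Ty.all (Ty.arrow (Ty.var 0) (Ty.arrow (Ty.arrow (Ty.var 0) (Ty.var 0)) (Ty.var 0)))

/-- Peirce's law P = ∀X∀Y.(((X → Y) → X) → X). -/
def PeirceTy : Ty :=
  Ty.all (Ty.all (Ty.arrow (Ty.arrow (Ty.arrow (Ty.var 1) (Ty.var 0)) (Ty.var 1)) (Ty.var 1)))

/-- Q = P → ∀X.X. -/
def QTy : Ty := Ty.arrow PeirceTy (Ty.all (Ty.var 0))

/-- A₁, …, Aₘ → X. -/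
def arrows (As : List Ty) (C : Ty) : Ty := As.foldr Ty.arrow C

/-- (x u₁ … uₙ). -/
def appList (t : Lam) (us : List Lam) : Lam := us.foldl Lam.app t

/-- `Spine X k T` : T is of the form ∀…∀(A₁ → ⋯ → A_j → var Y) with j ≥ k and
tail variable corresponding to the free variable X. -/
def Spine : ℕ → ℕ → Ty → Prop
  | X, k, Ty.var Y => k = 0 ∧ Y = X
  | _, _, Ty.bot => False
  | X, k, Ty.arrow _ B => Spine X (k - 1) B
  | X, k, Ty.all A => Spine (X + 1) k A

lemma Spine.free : ∀ (T : Ty) (X k : ℕ), Spine X k T → Ty.Free X T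
  | Ty.var _, _, _, h => h.2
  | Ty.arrow _ B, X, k, h => Or.inr (Spine.free B X (k - 1) h)
  | Ty.all A, X, k, h => Spine.free A (X + 1) k h

lemma spine_arrows : ∀ (As : List Ty) (X k : ℕ), k ≤ As.length →
    Spine X k (arrows As (Ty.var X))
  | [], X, k, h => by
    have : k = 0 := Nat.le_zero.mp h
    exact ⟨this, rfl⟩
  | A :: As, X, k, h => by
    show Spine X (k - 1) (arrows As (Ty.var X))
    exact spine_arrows As X (k - 1) (by simp at h ⊢; omega)

lemma Spine.lift : ∀ (T : Ty) (X k d : ℕ), Spine X k T →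
    Spine (if X < d then X else X + 1) k (Ty.lift d T)
  | Ty.var Y, X, k, d, h => by
    obtain ⟨hk, hY⟩ := h
    subst hY
    unfold Ty.lift
    split <;> simp_all [Spine]
  | Ty.bot, _, _, _, h => h.elim
  | Ty.arrow A B, X, k, d, h => Spine.lift B X (k - 1) d h
  | Ty.all A, X, k, d, h => by
    have := Spine.lift A (X + 1) k (d + 1) h
    show Spine ((if X < d then X else X + 1) + 1) k (Ty.lift (d + 1) A)
    have heq : (if X + 1 < d + 1 then X + 1 else X + 1 + 1)
        = (if X < d then X else X + 1) + 1 := by split <;> split <;> omega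
    rwa [heq] at this
  termination_by T => T

lemma Spine.subst : ∀ (T : Ty) (X k d : ℕ) (G : Ty), d < X → Spine X k T →
    Spine (X - 1) k (Ty.subst d G T)
  | Ty.var Y, X, k, d, G, hd, h => by
    obtain ⟨hk, hY⟩ := h
    subst hY
    unfold Ty.subst
    rw [if_neg (by omega), if_neg (by omega)]
    exact ⟨hk, rfl⟩
  | Ty.bot, _, _, _, _, _, h => h.elim
  | Ty.arrow A B, X, k, d, G, hd, h => Spine.subst B X (k - 1) d G hd h
  | Ty.all A, X, k, d, G, hd, h => by
    have h1 := Spine.subst A (X + 1) k (d + 1) (Ty.lift 0 G) (by omega) h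
    show Spine (X - 1 + 1) k (Ty.subst (d + 1) (Ty.lift 0 G) A)
    have h2 : X + 1 - 1 = X - 1 + 1 := by omega
    rwa [h2] at h1
  termination_by T => T

/-- Right-to-left application spine. -/
def myApp : Lam → List Lam → Lam
  | t, [] => t
  | t, v :: vs => Lam.app (myApp t vs) v

lemma myApp_append_single : ∀ (l : List Lam) (t v : Lam),
    myApp t (l ++ [v]) = myApp (Lam.app t v) l
  | [], _, _ => rfl
  | _ :: l, t, v => by simp [myApp, myApp_append_single l t v]

lemma appList_eq_myApp : ∀ (us : List Lam) (t : Lam),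
    appList t us = myApp t us.reverse
  | [], _ => rfl
  | v :: us, t => by
    have h1 : appList t (v :: us) = appList (Lam.app t v) us := rfl
    rw [h1, appList_eq_myApp us, List.reverse_cons, myApp_append_single]

lemma spine_main {Γ : List Ty} {t : Lam} {T : Ty} (ht : Typing Γ t T) :
    ∀ {i : ℕ} (vs : List Lam) (X k : ℕ) {S : Ty},
      t = myApp (Lam.var i) vs → Γ[i]? = some S →
      Spine X (vs.length + k) S → Spine X k T := by
  induction ht with
  | @var Γ n A h =>
    intro i vs X k S heq hx hS
    cases vs with
    | nil =>
      cases heq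
      rw [h] at hx
      cases hx
      simpa using hS
    | cons v vs => exact absurd heq (by simp [myApp])
  | lam _ _ =>
    intro i vs X k S heq hx hS
    cases vs <;> simp [myApp] at heq
  | @app Γ A B u v _ _ ihu _ =>
    intro i vs X k S heq hx hS
    cases vs with
    | nil => exact absurd heq (by simp [myApp])
    | cons v' vs' =>
      simp only [myApp, Lam.app.injEq] at heq
      have h1 := ihu vs' X (k + 1) heq.1 hx
        (by simpa [Nat.add_comm, Nat.add_assoc, Nat.add_left_comm] using hS)
      simpa [Spine] using h1
  | @allI Γ A t _ ih =>
    intro i vs X k S heq hx hS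
    show Spine (X + 1) k A
    refine ih (S := Ty.lift 0 S) vs (X + 1) k heq ?_ ?_
    · rw [List.getElem?_map, hx]; rfl
    · have := Spine.lift S X (vs.length + k) 0 hS
      simpa using this
  | @allE Γ A t G _ ih =>
    intro i vs X k S heq hx hS
    have h1 : Spine (X + 1) k A := ih vs X k heq hx hS
    have := Spine.subst A (X + 1) k 0 G (Nat.succ_pos X) h1
    simpa using this

/-- If (x u₁ … uₙ) (n ≥ 1) has type C where x : A₁,…,Aₘ → X with X a type
variable and m ≥ n, then X occurs free in C. -/
theorem systemF_head_var_free {Γ : List Ty} {i X : ℕ} {As : List Ty}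
    {us : List Lam} {C : Ty}
    (hx : Γ[i]? = some (arrows As (Ty.var X)))
    (hn : 1 ≤ us.length) (hm : us.length ≤ As.length)
    (ht : Typing Γ (appList (Lam.var i) us) C) :
    Ty.Free X C := by
  rw [appList_eq_myApp] at ht
  have hS : Spine X (us.reverse.length + (As.length - us.length))
      (arrows As (Ty.var X)) := by
    rw [List.length_reverse]
    have : us.length + (As.length - us.length) = As.length := by omega
    rw [this]
    exact spine_arrows As X As.length le_rfl
  exact Spine.free C X _ (spine_main ht us.reverse X (As.length - us.length) rfl hx hS)
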